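/- Suppose Q : ℝⁿ → Matrix (Fin m) (Fin m) ℝ is a conservative Q-matrix field admitting a family of invariant distributions μ^x, uniformly exponentially ergodic with constants C₀, λ, and let F : ℝⁿ × Fin m → ℝⁿ satisfy the central condition with ‖F(x,·)‖_∞ < ∞ for all x. Then there is a constant C > 0, depending only on C₀ and λ, such that the Poisson-equation solution Φ(x,i) := ∫₀^∞ (P^x_t F(x,·))(i) dt satisfies, for all x, y ∈ ℝⁿ: ‖Φ(x,·) − Φ(y,·)‖_∞ ≤ C · ( ‖F(x,·)‖_∞ · ‖Q(x) − Q(y)‖_ℓ + ‖F(x,·) − F(y,·)‖_∞ ). -/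

import Mathlib

/-!
Write `Π_x = 𝟙 μ_xᵀ` and let `G_x = ∫₀^∞ (exp (t Q(x)) - Π_x) dt` be the deviation matrix.
Exponential ergodicity gives `‖G_x‖ ≤ C₀ / λ`, and the central condition gives
`Φ(x,·) = G_x F(x,·)`. Differentiating `exp (t Q)` shows that `G` inverts `Q` up to the
projection, `Q G = G Q = Π - 1`, while `Π_y G_y = G_x Π_y = 0`. Pure algebra then gives the
resolvent-type identity `G_x - G_y = G_x (Q_x - Q_y) G_y - Π_x (Q_x - Q_y) G_y G_y`, hence
`‖G_x - G_y‖ ≤ 2 (C₀ / λ)² ‖Q_x - Q_y‖`, and the bound follows from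
`Φ(x,·) - Φ(y,·) = (G_x - G_y) F(x,·) + G_y (F(x,·) - F(y,·))` with `C = 2 (C₀ / λ)² + C₀ / λ`.
Everything but the last step holds in any real Banach algebra; for matrices the relevant norm is
the ℓ∞ operator norm, which is `‖·‖_ℓ`.
-/

open MeasureTheory

noncomputable section

/-- ℓ-norm of a matrix: `‖M‖_ℓ = max_i Σⱼ |M i j|`. -/
def lnorm {m : ℕ} (M : Matrix (Fin m) (Fin m) ℝ) : ℝ := ⨆ i, ∑ j, |M i j|

/-- Solution `Φ(x,i) := ∫₀^∞ (P^x_t F(x,·))(i) dt` of the Poisson equation,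
defined by componentwise Bochner integration. -/
def poissonSol {n m : ℕ} (Q : EuclideanSpace ℝ (Fin n) → Matrix (Fin m) (Fin m) ℝ)
    (F : EuclideanSpace ℝ (Fin n) → Fin m → EuclideanSpace ℝ (Fin n))
    (x : EuclideanSpace ℝ (Fin n)) (i : Fin m) : EuclideanSpace ℝ (Fin n) :=
  WithLp.toLp 2 (fun l => ∫ t in Set.Ici (0:ℝ), (NormedSpace.exp (t • Q x)).mulVec (fun j => F x j l) i)

open NormedSpace Filter Topology Set Matrix

section BanachAlgebra

variable {𝔸 : Type*} [NormedRing 𝔸] [NormedAlgebra ℝ 𝔸]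

structure IsExpErgodic (Q P : 𝔸) (C₀ lam : ℝ) : Prop where
  generator_mul : Q * P = 0
  mul_generator : P * Q = 0
  norm_exp_smul_sub_le : ∀ t, 0 ≤ t → ‖exp (t • Q) - P‖ ≤ C₀ * Real.exp (-lam * t)

def deviation (Q P : 𝔸) : 𝔸 := ∫ t in Ioi (0 : ℝ), exp (t • Q) - P

namespace IsExpErgodic

variable {Q P : 𝔸} {C₀ lam : ℝ}

theorem tendsto_exp_smul (h : IsExpErgodic Q P C₀ lam) (hlam : 0 < lam) :
    Tendsto (fun t : ℝ => exp (t • Q)) atTop (𝓝 P) := by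
  rw [tendsto_iff_norm_sub_tendsto_zero]
  have hdecay : Tendsto (fun t => C₀ * Real.exp (-lam * t)) atTop (𝓝 0) := by
    simpa using (Real.tendsto_exp_atBot.comp
      (tendsto_id.const_mul_atTop_of_neg (neg_lt_zero.2 hlam))).const_mul C₀
  exact squeeze_zero' (Eventually.of_forall fun _ => norm_nonneg _)
    ((eventually_ge_atTop 0).mono h.norm_exp_smul_sub_le) hdecay

theorem norm_deviation_le (h : IsExpErgodic Q P C₀ lam) (hlam : 0 < lam) :
    ‖deviation Q P‖ ≤ C₀ / lam := by
  have hbound := norm_integral_le_of_norm_le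
    ((integrableOn_exp_mul_Ioi (neg_lt_zero.2 hlam) 0).const_mul C₀)
    ((ae_restrict_iff' measurableSet_Ioi).2
      (ae_of_all _ fun t ht => h.norm_exp_smul_sub_le t (le_of_lt ht)))
  rw [integral_const_mul, integral_exp_mul_Ioi (neg_lt_zero.2 hlam), mul_zero, Real.exp_zero,
    neg_div_neg_eq, mul_one_div] at hbound
  exact hbound

end IsExpErgodic

variable [CompleteSpace 𝔸]

theorem NormedSpace.exp_mul_of_mul_eq_zero {a b : 𝔸} (h : a * b = 0) : exp a * b = b := by
  rw [exp_eq_tsum ℝ, ← Summable.tsum_mul_right b (expSeries_summable' (𝕂 := ℝ) a),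
    tsum_eq_single 0]
  · simp
  · intro n hn
    rw [smul_mul_assoc, ← Nat.succ_pred_eq_of_ne_zero hn, pow_succ, mul_assoc, h, mul_zero,
      smul_zero]

theorem NormedSpace.mul_exp_of_mul_eq_zero {a b : 𝔸} (h : b * a = 0) : b * exp a = b := by
  rw [exp_eq_tsum ℝ, ← Summable.tsum_mul_left b (expSeries_summable' (𝕂 := ℝ) a),
    tsum_eq_single 0]
  · simp
  · intro n hn
    rw [mul_smul_comm, ← Nat.succ_pred_eq_of_ne_zero hn, pow_succ', ← mul_assoc, h, zero_mul,
      smul_zero]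

namespace IsExpErgodic

variable {Q P R : 𝔸} {C₀ lam : ℝ}

theorem integrableOn_exp_smul_sub (h : IsExpErgodic Q P C₀ lam) (hlam : 0 < lam) :
    IntegrableOn (fun t : ℝ => exp (t • Q) - P) (Ioi 0) :=
  Integrable.mono' ((integrableOn_exp_mul_Ioi (neg_lt_zero.2 hlam) 0).const_mul C₀)
    ((continuous_iff_continuousAt.2 fun t => (hasDerivAt_exp_smul_const Q t).continuousAt).sub
      continuous_const).aestronglyMeasurable
    ((ae_restrict_iff' measurableSet_Ioi).2
      (ae_of_all _ fun t ht => h.norm_exp_smul_sub_le t (le_of_lt ht)))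

theorem mul_deviation (h : IsExpErgodic Q P C₀ lam) (hlam : 0 < lam) :
    Q * deviation Q P = P - 1 := by
  have hderiv (t : ℝ) : HasDerivAt (fun t : ℝ => exp (t • Q)) (Q * (exp (t • Q) - P)) t := by
    simpa [mul_sub, h.generator_mul] using hasDerivAt_exp_smul_const' Q t
  rw [deviation, ← integral_const_mul_of_integrable (h.integrableOn_exp_smul_sub hlam),
    integral_Ioi_of_hasDerivAt_of_tendsto' (fun t _ => hderiv t)
      ((h.integrableOn_exp_smul_sub hlam).const_mul Q) (h.tendsto_exp_smul hlam), zero_smul,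
    exp_zero]

theorem deviation_mul (h : IsExpErgodic Q P C₀ lam) (hlam : 0 < lam) :
    deviation Q P * Q = P - 1 := by
  have hderiv (t : ℝ) : HasDerivAt (fun t : ℝ => exp (t • Q)) ((exp (t • Q) - P) * Q) t := by
    simpa [sub_mul, h.mul_generator] using hasDerivAt_exp_smul_const Q t
  rw [deviation, ← integral_mul_const_of_integrable (h.integrableOn_exp_smul_sub hlam),
    integral_Ioi_of_hasDerivAt_of_tendsto' (fun t _ => hderiv t)
      ((h.integrableOn_exp_smul_sub hlam).mul_const Q) (h.tendsto_exp_smul hlam), zero_smul,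
    exp_zero]

theorem deviation_mul_eq_zero (h : IsExpErgodic Q P C₀ lam) (hlam : 0 < lam)
    (hQR : Q * R = 0) (hPR : P * R = R) : deviation Q P * R = 0 := by
  rw [deviation, ← integral_mul_const_of_integrable (h.integrableOn_exp_smul_sub hlam)]
  simp [sub_mul, exp_mul_of_mul_eq_zero, hQR, hPR]

theorem mul_deviation_eq_zero (h : IsExpErgodic Q P C₀ lam) (hlam : 0 < lam)
    (hRQ : R * Q = 0) (hRP : R * P = R) : R * deviation Q P = 0 := by
  rw [deviation, ← integral_const_mul_of_integrable (h.integrableOn_exp_smul_sub hlam)]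
  simp [mul_sub, mul_exp_of_mul_eq_zero, hRQ, hRP]

end IsExpErgodic

section Perturbation

variable {Qx Qy Px Py : 𝔸} {C₀ lam : ℝ}

theorem IsExpErgodic.sub_eq_mul_sub_mul_deviation (hx : IsExpErgodic Qx Px C₀ lam)
    (hy : IsExpErgodic Qy Py C₀ lam) (hlam : 0 < lam) (hPP : Px * Py = Py) :
    Px - Py = Px * (Qx - Qy) * deviation Qy Py := by
  rw [mul_sub, sub_mul, hx.mul_generator, zero_mul, mul_assoc, hy.mul_deviation hlam, mul_sub,
    hPP, mul_one, zero_sub, neg_sub]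

theorem IsExpErgodic.deviation_sub_deviation (hx : IsExpErgodic Qx Px C₀ lam)
    (hy : IsExpErgodic Qy Py C₀ lam) (hlam : 0 < lam) (hQP : Qx * Py = 0) (hPP : Px * Py = Py)
    (hPy : Py * Py = Py) :
    deviation Qx Px - deviation Qy Py
      = deviation Qx Px * (Qx - Qy) * deviation Qy Py - (Px - Py) * deviation Qy Py := by
  rw [mul_sub, sub_mul, hx.deviation_mul hlam, mul_assoc, hy.mul_deviation hlam, sub_mul, mul_sub,
    hx.deviation_mul_eq_zero hlam hQP hPP, sub_mul,
    hy.mul_deviation_eq_zero hlam hy.mul_generator hPy]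
  noncomm_ring

theorem IsExpErgodic.norm_deviation_sub_deviation_le (hx : IsExpErgodic Qx Px C₀ lam)
    (hy : IsExpErgodic Qy Py C₀ lam) (hlam : 0 < lam) (hQP : Qx * Py = 0) (hPP : Px * Py = Py)
    (hPy : Py * Py = Py) :
    ‖deviation Qx Px - deviation Qy Py‖ ≤ (1 + ‖Px‖) * (C₀ / lam) ^ 2 * ‖Qx - Qy‖ := by
  have hGx := hx.norm_deviation_le hlam
  have hGy := hy.norm_deviation_le hlam
  have hC : 0 ≤ C₀ / lam := (norm_nonneg _).trans hGy
  rw [hx.deviation_sub_deviation hy hlam hQP hPP hPy, hx.sub_eq_mul_sub_mul_deviation hy hlam hPP]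
  calc _ ≤ ‖deviation Qx Px‖ * ‖Qx - Qy‖ * ‖deviation Qy Py‖
        + ‖Px‖ * ‖Qx - Qy‖ * ‖deviation Qy Py‖ * ‖deviation Qy Py‖ :=
        (norm_sub_le _ _).trans (add_le_add norm_mul₃_le
          ((norm_mul_le _ _).trans (by gcongr; exact norm_mul₃_le)))
    _ ≤ (C₀ / lam) * ‖Qx - Qy‖ * (C₀ / lam) + ‖Px‖ * ‖Qx - Qy‖ * (C₀ / lam) * (C₀ / lam) := by
        gcongr
    _ = (1 + ‖Px‖) * (C₀ / lam) ^ 2 * ‖Qx - Qy‖ := by ring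

end Perturbation

end BanachAlgebra

theorem Pi.norm_eq_ciSup {ι E : Type*} [Fintype ι] [SeminormedAddCommGroup E] (f : ι → E) :
    ‖f‖ = ⨆ i, ‖f i‖ :=
  le_antisymm ((pi_norm_le_iff_of_nonneg (Real.iSup_nonneg fun _ => norm_nonneg _)).2
      fun i => le_ciSup (f := fun i => ‖f i‖) (Finite.bddAbove_range _) i)
    (Real.iSup_le (fun i => norm_le_pi_norm f i) (norm_nonneg _))

section LinftyOpNorm

attribute [local instance] Matrix.linftyOpNormedAddCommGroup Matrix.linftyOpNormedRing
  Matrix.linftyOpNormedAlgebra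

namespace Matrix

section

variable {ι κ E : Type*} [Fintype ι] [Fintype κ] [SeminormedAddCommGroup E] [NormedSpace ℝ E]

theorem linfty_opNorm_eq_ciSup (M : Matrix ι κ ℝ) : ‖M‖ = ⨆ i, ∑ j, |M i j| := by
  change ‖fun i => WithLp.toLp 1 (M i)‖ = _
  simp [Pi.norm_eq_ciSup, PiLp.norm_eq_of_L1]

theorem norm_sum_smul_le (M : Matrix ι κ ℝ) (w : κ → E) (i : ι) :
    ‖∑ j, M i j • w j‖ ≤ ‖M‖ * ‖w‖ :=
  calc ‖∑ j, M i j • w j‖ ≤ ∑ j, |M i j| * ‖w j‖ :=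
        norm_sum_le_of_le _ fun j _ => (norm_smul _ _).le
    _ ≤ ∑ j, |M i j| * ‖w‖ := by gcongr with j; exact norm_le_pi_norm w j
    _ ≤ ‖M‖ * ‖w‖ := by
        rw [← Finset.sum_mul, linfty_opNorm_eq_ciSup]
        gcongr
        exact le_ciSup (f := fun i => ∑ j, |M i j|) (Finite.bddAbove_range _) i

theorem norm_sum_smul_sub_sum_smul_le (A B : Matrix ι κ ℝ) (v w : κ → E) (i : ι) :
    ‖∑ j, A i j • v j - ∑ j, B i j • w j‖ ≤ ‖A - B‖ * ‖v‖ + ‖B‖ * ‖v - w‖ := by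
  have hsplit : ∑ j, A i j • v j - ∑ j, B i j • w j
      = ∑ j, (A - B) i j • v j + ∑ j, B i j • (v - w) j := by
    simp only [sub_apply, Pi.sub_apply, sub_smul, smul_sub, Finset.sum_sub_distrib]
    abel
  rw [hsplit]
  exact (norm_add_le _ _).trans (add_le_add (norm_sum_smul_le _ _ i) (norm_sum_smul_le _ _ i))

end

variable {ι : Type*} [Fintype ι] {Q : Matrix ι ι ℝ} {μ : ι → ℝ} {C₀ lam : ℝ}

theorem mul_vecMulVec_one_eq_zero (hQ : ∀ i, ∑ j, Q i j = 0) (ν : ι → ℝ) :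
    Q * vecMulVec 1 ν = 0 := by
  rw [mul_vecMulVec, show Q *ᵥ 1 = 0 from funext fun i => by simp [mulVec, dotProduct, hQ],
    zero_vecMulVec]

theorem vecMulVec_one_mul_vecMulVec_one (hμ : ∑ i, μ i = 1) (ν : ι → ℝ) :
    vecMulVec (1 : ι → ℝ) μ * vecMulVec 1 ν = vecMulVec 1 ν := by
  rw [vecMulVec_mul_vecMulVec, dotProduct_one, hμ, one_smul]

theorem norm_vecMulVec_one_le (hμ₀ : ∀ i, 0 ≤ μ i) (hμ : ∑ i, μ i = 1) :
    ‖vecMulVec (1 : ι → ℝ) μ‖ ≤ 1 := by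
  rw [linfty_opNorm_eq_ciSup]
  refine Real.iSup_le (fun _ => ?_) zero_le_one
  simp [vecMulVec_apply, abs_of_nonneg (hμ₀ _), hμ]

theorem isExpErgodic_vecMulVec_one [DecidableEq ι] (hC₀ : 0 ≤ C₀) (hQ : ∀ i, ∑ j, Q i j = 0)
    (hμQ : ∀ j, ∑ i, μ i * Q i j = 0)
    (herg : ∀ i (t : ℝ), 0 ≤ t → ∑ j, |exp (t • Q) i j - μ j| ≤ C₀ * Real.exp (-lam * t)) :
    IsExpErgodic Q (vecMulVec 1 μ) C₀ lam where
  generator_mul := mul_vecMulVec_one_eq_zero hQ μ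
  mul_generator := by
    rw [vecMulVec_mul, show μ ᵥ* Q = 0 from funext fun j => by simp [vecMul, dotProduct, hμQ],
      vecMulVec_zero]
  norm_exp_smul_sub_le t ht := by
    rw [linfty_opNorm_eq_ciSup]
    refine Real.iSup_le (fun i => ?_) (by positivity)
    simp only [sub_apply, vecMulVec_apply, Pi.one_apply, one_mul]
    exact herg i t ht

end Matrix

theorem poissonSol_eq_sum_smul_deviation {n m : ℕ}
    {Q : EuclideanSpace ℝ (Fin n) → Matrix (Fin m) (Fin m) ℝ}
    {F : EuclideanSpace ℝ (Fin n) → Fin m → EuclideanSpace ℝ (Fin n)}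
    {x : EuclideanSpace ℝ (Fin n)} {μ : Fin m → ℝ} {C₀ lam : ℝ}
    (hP : IsExpErgodic (Q x) (vecMulVec 1 μ) C₀ lam) (hlam : 0 < lam) (hF : ∑ i, μ i • F x i = 0)
    (i : Fin m) : poissonSol Q F x i = ∑ j, deviation (Q x) (vecMulVec 1 μ) i j • F x j := by
  ext l
  set v : Fin m → ℝ := fun j => F x j l
  have hPv : vecMulVec (1 : Fin m → ℝ) μ *ᵥ v = 0 := by
    have hμv : μ ⬝ᵥ v = 0 := by simpa [dotProduct, v] using congr($hF l)
    rw [vecMulVec_mulVec, hμv]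
    simp
  let L : Matrix (Fin m) (Fin m) ℝ →ₗ[ℝ] ℝ := LinearMap.proj i ∘ₗ (mulVecBilin ℝ ℝ).flip v
  calc poissonSol Q F x i l = ∫ t in Ioi (0 : ℝ), ((exp (t • Q x) - vecMulVec 1 μ) *ᵥ v) i := by
        simp only [sub_mulVec, hPv, sub_zero, poissonSol, integral_Ici_eq_integral_Ioi]; rfl
    _ = (deviation (Q x) (vecMulVec 1 μ) *ᵥ v) i :=
        L.toContinuousLinearMap.integral_comp_comm (hP.integrableOn_exp_smul_sub hlam)
    _ = _ := by simp [mulVec, dotProduct, v]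

end LinftyOpNorm

theorem poisson_solution_lipschitz_bound (C₀ lam : ℝ) (hC₀ : 0 < C₀) (hlam : 0 < lam) :
    ∃ C > 0, ∀ (n m : ℕ) (Q : EuclideanSpace ℝ (Fin n) → Matrix (Fin m) (Fin m) ℝ)
      (μ : EuclideanSpace ℝ (Fin n) → Fin m → ℝ)
      (F : EuclideanSpace ℝ (Fin n) → Fin m → EuclideanSpace ℝ (Fin n)),
      (∀ x i j, i ≠ j → 0 ≤ Q x i j) →
      (∀ x i, ∑ j, Q x i j = 0) →
      (∀ x i, 0 < μ x i) →
      (∀ x, ∑ i, μ x i = 1) →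
      (∀ x j, ∑ i, μ x i * Q x i j = 0) →
      (∀ x i (t : ℝ), 0 ≤ t →
        ∑ j, |NormedSpace.exp (t • Q x) i j - μ x j| ≤ C₀ * Real.exp (-lam * t)) →
      -- central condition
      (∀ x, ∑ i, μ x i • F x i = 0) →
      ∀ x y : EuclideanSpace ℝ (Fin n),
        (⨆ i, ‖poissonSol Q F x i - poissonSol Q F y i‖)
          ≤ C * ((⨆ i, ‖F x i‖) * lnorm (Q x - Q y) + ⨆ i, ‖F x i - F y i‖) := by
  refine ⟨2 * (C₀ / lam) ^ 2 + C₀ / lam, by positivity, ?_⟩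
  intro n m Q μ F _ hQ hμ₀ hμ hμQ herg hF x y
  let _ : NormedRing (Matrix (Fin m) (Fin m) ℝ) := Matrix.linftyOpNormedRing
  let _ : NormedAlgebra ℝ (Matrix (Fin m) (Fin m) ℝ) := Matrix.linftyOpNormedAlgebra
  have hP (z : EuclideanSpace ℝ (Fin n)) :=
    isExpErgodic_vecMulVec_one hC₀.le (hQ z) (hμQ z) (herg z)
  have hPP (z w : EuclideanSpace ℝ (Fin n)) := vecMulVec_one_mul_vecMulVec_one (hμ z) (μ w)
  have hG := (hP x).norm_deviation_sub_deviation_le (hP y) hlam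
    (mul_vecMulVec_one_eq_zero (hQ x) _) (hPP x y) (hPP y y)
  have hPx := norm_vecMulVec_one_le (fun i => (hμ₀ x i).le) (hμ x)
  have hGy := (hP y).norm_deviation_le hlam
  simp only [poissonSol_eq_sum_smul_deviation (hP _) hlam (hF _), lnorm, ← linfty_opNorm_eq_ciSup,
    ← Pi.norm_eq_ciSup]
  refine (pi_norm_le_iff_of_nonneg (by positivity)).2 fun i => ?_
  calc _ ≤ _ := norm_sum_smul_sub_sum_smul_le _ _ (F x) (F y) i
    _ ≤ (1 + 1) * (C₀ / lam) ^ 2 * ‖Q x - Q y‖ * ‖F x‖ + C₀ / lam * ‖F x - F y‖ := by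
        gcongr
        exact hG.trans (by gcongr)
    _ ≤ _ := by
        have hc : 0 ≤ C₀ / lam := by positivity
        have hd : 0 ≤ ‖F x - F y‖ := norm_nonneg _
        have hfa : 0 ≤ ‖F x‖ * ‖Q x - Q y‖ := by positivity
        change _ ≤ _ * (_ + ‖F x - F y‖)
        nlinarith [mul_nonneg hc hfa, mul_nonneg (sq_nonneg (C₀ / lam)) hd]
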